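/- At every (x, y, z) ∈ 𝒜, the function f is Fréchet differentiable with derivative (s, t, r) ↦ α·s + β·t + γ·r, i.e., ∂f/∂x = α, ∂f/∂y = β, ∂f/∂z = γ. -/

import Mathlib

open Real

/-- Milnor's Lobachevsky function. -/
noncomputable def Lob (x : ℝ) : ℝ := -∫ t in (0:ℝ)..x, Real.log |2 * Real.sin t|

/-- Angle opposite the side of length `a` in a euclidean triangle with side
lengths `a`, `b`, `c`, given by the arccos formula (which, since `Real.arccos`
clamps, also implements the broken-triangle convention: the angle opposite a
too-long side is `π` and the other two angles are `0`). -/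
noncomputable def eang (a b c : ℝ) : ℝ := Real.arccos ((b^2 + c^2 - a^2) / (2*b*c))

/-- The open domain `𝒜` where `eˣ, e^y, e^z` satisfy the strict triangle
inequalities. -/
def Adom : Set (ℝ × ℝ × ℝ) :=
  {p | Real.exp p.1 < Real.exp p.2.1 + Real.exp p.2.2 ∧
       Real.exp p.2.1 < Real.exp p.2.2 + Real.exp p.1 ∧
       Real.exp p.2.2 < Real.exp p.1 + Real.exp p.2.1}

/-- The triangle function `f(x,y,z) = αx + βy + γz + Л(α) + Л(β) + Л(γ)`
(extended to all of `ℝ³` by the broken-triangle convention). -/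
noncomputable def fTri (p : ℝ × ℝ × ℝ) : ℝ :=
  eang (Real.exp p.1) (Real.exp p.2.1) (Real.exp p.2.2) * p.1 +
  eang (Real.exp p.2.1) (Real.exp p.2.2) (Real.exp p.1) * p.2.1 +
  eang (Real.exp p.2.2) (Real.exp p.1) (Real.exp p.2.1) * p.2.2 +
  Lob (eang (Real.exp p.1) (Real.exp p.2.1) (Real.exp p.2.2)) +
  Lob (eang (Real.exp p.2.1) (Real.exp p.2.2) (Real.exp p.1)) +
  Lob (eang (Real.exp p.2.2) (Real.exp p.1) (Real.exp p.2.1))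

/-!
Differentiating `α x + Л(α)` gives `α dx + (x - log |2 sin α|) dα`, since `Л' = -log |2 sin|`.
By the law of sines `eˣ / (2 sin α)` is the circumradius `R` for each of the three angles, so the
`dα`-terms add up to `log R · d(α + β + γ)`, which vanishes because the angle sum is `π` on `𝒜`.
-/

open Real Topology

theorem intervalIntegrable_log_abs_two_mul_sin (a b : ℝ) :
    IntervalIntegrable (fun t => log |2 * sin t|) MeasureTheory.volume a b :=
  (analyticOnNhd_const.mul analyticOnNhd_sin).meromorphicOn.intervalIntegrable_log_norm

theorem hasDerivAt_Lob {θ : ℝ} (hθ : sin θ ≠ 0) : HasDerivAt Lob (-log |2 * sin θ|) θ := by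
  have hmeas : Measurable fun t => log |2 * sin t| := by fun_prop
  have hcont : ContinuousAt (fun t => log |2 * sin t|) θ :=
    (continuous_const.mul continuous_sin).abs.continuousAt.log
      (abs_ne_zero.2 (mul_ne_zero two_ne_zero hθ))
  exact (intervalIntegral.integral_hasDerivAt_right (intervalIntegrable_log_abs_two_mul_sin 0 θ)
    hmeas.aestronglyMeasurable.stronglyMeasurableAtFilter hcont).neg

def IsTriangle (a b c : ℝ) : Prop := a < b + c ∧ b < c + a ∧ c < a + b

/-- `16 · area²`, by Heron's formula. -/
def heron (a b c : ℝ) : ℝ := 2*a^2*b^2 + 2*b^2*c^2 + 2*c^2*a^2 - a^4 - b^4 - c^4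

noncomputable def circumradius (a b c : ℝ) : ℝ := a * b * c / √(heron a b c)

theorem heron_rotate (a b c : ℝ) : heron b c a = heron a b c := by unfold heron; ring

theorem circumradius_rotate (a b c : ℝ) : circumradius b c a = circumradius a b c := by
  rw [circumradius, circumradius, heron_rotate]; ring

namespace IsTriangle

variable {a b c : ℝ} (h : IsTriangle a b c)
include h

theorem rotate : IsTriangle b c a := ⟨h.2.1, h.2.2, h.1⟩

theorem pos : 0 < a := by linarith [h.2.1, h.2.2]

theorem heron_pos : 0 < heron a b c := by
  have hpos : 0 < a + b + c := by linarith [h.pos, h.rotate.pos, h.rotate.rotate.pos]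
  obtain ⟨h₁, h₂, h₃⟩ := h
  have : heron a b c = (a + b + c) * (b + c - a) * (c + a - b) * (a + b - c) := by
    unfold heron; ring
  rw [this]
  exact mul_pos (mul_pos (mul_pos hpos (by linarith)) (by linarith)) (by linarith)

theorem cos_arg_mem : (b^2 + c^2 - a^2) / (2*b*c) ∈ Set.Ioo (-1) 1 := by
  have hbc : 0 < 2*b*c := by have := h.rotate.pos; have := h.rotate.rotate.pos; positivity
  obtain ⟨h₁, h₂, h₃⟩ := h
  constructor
  · rw [lt_div_iff₀ hbc]
    nlinarith [mul_pos (sub_pos.2 h₁) (show 0 < a + b + c by linarith)]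
  · rw [div_lt_one hbc]
    nlinarith [mul_pos (show 0 < c + a - b by linarith) (sub_pos.2 h₃)]

theorem cos_eang : cos (eang a b c) = (b^2 + c^2 - a^2) / (2*b*c) :=
  cos_arccos h.cos_arg_mem.1.le h.cos_arg_mem.2.le

theorem sin_eang : sin (eang a b c) = √(heron a b c) / (2*b*c) := by
  have hb := h.rotate.pos
  have hc := h.rotate.rotate.pos
  have : 1 - ((b^2 + c^2 - a^2) / (2*b*c))^2 = heron a b c / (2*b*c)^2 := by
    unfold heron; field_simp; ring
  rw [eang, sin_arccos, this, sqrt_div' _ (sq_nonneg _), sqrt_sq (by positivity)]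

theorem eang_mem : eang a b c ∈ Set.Ioo 0 π :=
  ⟨arccos_pos.2 h.cos_arg_mem.2, arccos_lt_pi.2 h.cos_arg_mem.1⟩

theorem eang_add_eang_lt_pi : eang a b c + eang b c a < π := by
  have hu := h.cos_arg_mem
  have hv := h.rotate.cos_arg_mem
  have ha := h.pos
  have hb := h.rotate.pos
  have hc := h.rotate.rotate.pos
  -- `cos α + cos β = (a + b)(c + a - b)(b + c - a) / (2abc) > 0`
  have hsum : -((c^2 + a^2 - b^2) / (2*c*a)) < (b^2 + c^2 - a^2) / (2*b*c) := by
    rw [neg_lt_iff_pos_add, div_add_div _ _ (by positivity) (by positivity)]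
    apply div_pos _ (by positivity)
    nlinarith [mul_pos (mul_pos (add_pos ha hb) (show 0 < c + a - b by linarith [h.2.1]))
      (show 0 < b + c - a by linarith [h.1]), mul_pos hb hc]
  have := strictAntiOn_arccos ⟨by linarith [hv.2], by linarith [hv.1]⟩ ⟨hu.1.le, hu.2.le⟩ hsum
  rw [arccos_neg] at this
  unfold eang
  linarith

theorem eang_add_eang_add_eang : eang a b c + eang b c a + eang c a b = π := by
  have hα := h.eang_mem
  have hβ := h.rotate.eang_mem
  have hαβ := h.eang_add_eang_lt_pi
  have ha := h.pos
  have hb := h.rotate.pos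
  have hc := h.rotate.rotate.pos
  have hcos : cos (π - (eang a b c + eang b c a)) = (a^2 + b^2 - c^2) / (2*a*b) := by
    rw [cos_pi_sub, cos_add, h.cos_eang, h.rotate.cos_eang, h.sin_eang, h.rotate.sin_eang,
      heron_rotate a b c, div_mul_div_comm (√_), mul_self_sqrt h.heron_pos.le]
    unfold heron
    field_simp
    ring
  have : eang c a b = π - (eang a b c + eang b c a) := by
    rw [eang, ← hcos, arccos_cos (by linarith) (by linarith [hα.1, hβ.1])]
  linarith

theorem two_mul_sin_eang_mul_circumradius : 2 * sin (eang a b c) * circumradius a b c = a := by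
  have hb := h.rotate.pos
  have hc := h.rotate.rotate.pos
  rw [h.sin_eang, circumradius]
  field_simp [(sqrt_pos.2 h.heron_pos).ne']

theorem sin_eang_pos : 0 < sin (eang a b c) :=
  sin_pos_of_pos_of_lt_pi h.eang_mem.1 h.eang_mem.2

theorem log_sub_log_abs_two_mul_sin_eang :
    log a - log |2 * sin (eang a b c)| = log (circumradius a b c) := by
  have hsin : 0 < 2 * sin (eang a b c) := mul_pos two_pos h.sin_eang_pos
  have : a / (2 * sin (eang a b c)) = circumradius a b c :=
    (div_eq_iff hsin.ne').2 (by rw [mul_comm]; exact h.two_mul_sin_eang_mul_circumradius.symm)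
  rw [log_abs, ← log_div h.pos.ne' hsin.ne', this]

end IsTriangle

section Derivatives

variable {E : Type*} [NormedAddCommGroup E] [NormedSpace ℝ E] {p : E}

theorem DifferentiableAt.eang {f g h : E → ℝ} (hf : DifferentiableAt ℝ f p)
    (hg : DifferentiableAt ℝ g p) (hh : DifferentiableAt ℝ h p)
    (ht : IsTriangle (f p) (g p) (h p)) :
    DifferentiableAt ℝ (fun q => _root_.eang (f q) (g q) (h q)) p := by
  have hgp := ht.rotate.pos
  have hhp := ht.rotate.rotate.pos
  have hcos := ht.cos_arg_mem
  exact (differentiableAt_arccos.2 ⟨hcos.1.ne', hcos.2.ne⟩).comp p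
    (by fun_prop (disch := positivity))

theorem HasFDerivAt.mul_add_Lob {θ u : E → ℝ} {θ' u' : E →L[ℝ] ℝ} (hθ : HasFDerivAt θ θ' p)
    (hu : HasFDerivAt u u' p) (hsin : Real.sin (θ p) ≠ 0) :
    HasFDerivAt (fun q => θ q * u q + Lob (θ q))
      (θ p • u' + (u p - Real.log |2 * Real.sin (θ p)|) • θ') p := by
  refine ((hθ.mul hu).add ((hasDerivAt_Lob hsin).comp_hasFDerivAt p hθ)).congr_fderiv ?_
  ext v
  simp only [add_apply, smul_apply, smul_eq_mul]
  ring

theorem hasFDerivAt_triple_mul_add_Lob {α β γ u v w : E → ℝ} {α' β' γ' u' v' w' : E →L[ℝ] ℝ}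
    {c K : ℝ} (hα : HasFDerivAt α α' p) (hβ : HasFDerivAt β β' p) (hγ : HasFDerivAt γ γ' p)
    (hu : HasFDerivAt u u' p) (hv : HasFDerivAt v v' p) (hw : HasFDerivAt w w' p)
    (hsinα : Real.sin (α p) ≠ 0) (hsinβ : Real.sin (β p) ≠ 0) (hsinγ : Real.sin (γ p) ≠ 0)
    (hsum : ∀ᶠ q in 𝓝 p, α q + β q + γ q = c)
    (hKα : u p - Real.log |2 * Real.sin (α p)| = K)
    (hKβ : v p - Real.log |2 * Real.sin (β p)| = K)
    (hKγ : w p - Real.log |2 * Real.sin (γ p)| = K) :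
    HasFDerivAt (fun q => α q * u q + β q * v q + γ q * w q + Lob (α q) + Lob (β q) + Lob (γ q))
      (α p • u' + β p • v' + γ p • w') p := by
  have hzero : α' + β' + γ' = 0 :=
    ((hα.add hβ).add hγ).unique ((hasFDerivAt_const c p).congr_of_eventuallyEq hsum)
  have h := ((hα.mul_add_Lob hu hsinα).add (hβ.mul_add_Lob hv hsinβ)).add (hγ.mul_add_Lob hw hsinγ)
  rw [hKα, hKβ, hKγ] at h
  refine (h.congr_of_eventuallyEq (.of_forall fun q => ?_)).congr_fderiv ?_
  · simp only [Pi.add_apply]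
    ring
  · linear_combination (norm := module) K • hzero

end Derivatives

theorem isOpen_Adom : IsOpen Adom := by
  simp only [Adom, Set.ofPred_and]
  refine .inter ?_ (.inter ?_ ?_) <;> exact isOpen_lt (by fun_prop) (by fun_prop)

theorem fTri_hasFDerivAt (p : ℝ × ℝ × ℝ) (hp : p ∈ Adom) :
    ∃ L : ℝ × ℝ × ℝ →L[ℝ] ℝ, HasFDerivAt fTri L p ∧
      ∀ s t r : ℝ, L (s, t, r) =
        eang (Real.exp p.1) (Real.exp p.2.1) (Real.exp p.2.2) * s +
        eang (Real.exp p.2.1) (Real.exp p.2.2) (Real.exp p.1) * t +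
        eang (Real.exp p.2.2) (Real.exp p.1) (Real.exp p.2.1) * r := by
  have h : IsTriangle (exp p.1) (exp p.2.1) (exp p.2.2) := hp
  have hKα := h.log_sub_log_abs_two_mul_sin_eang
  have hKβ := h.rotate.log_sub_log_abs_two_mul_sin_eang
  have hKγ := h.rotate.rotate.log_sub_log_abs_two_mul_sin_eang
  rw [log_exp] at hKα hKβ hKγ
  rw [circumradius_rotate] at hKβ
  rw [circumradius_rotate, circumradius_rotate] at hKγ
  have hsum : ∀ᶠ q in 𝓝 p, eang (exp q.1) (exp q.2.1) (exp q.2.2) +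
      eang (exp q.2.1) (exp q.2.2) (exp q.1) + eang (exp q.2.2) (exp q.1) (exp q.2.1) = π :=
    Filter.eventually_of_mem (isOpen_Adom.mem_nhds hp) fun q hq =>
      IsTriangle.eang_add_eang_add_eang hq
  refine ⟨_, hasFDerivAt_triple_mul_add_Lob
    (DifferentiableAt.eang (by fun_prop) (by fun_prop) (by fun_prop) h).hasFDerivAt
    (DifferentiableAt.eang (by fun_prop) (by fun_prop) (by fun_prop) h.rotate).hasFDerivAt
    (DifferentiableAt.eang (by fun_prop) (by fun_prop) (by fun_prop) h.rotate.rotate).hasFDerivAt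
    hasFDerivAt_fst hasFDerivAt_snd.fst hasFDerivAt_snd.snd
    h.sin_eang_pos.ne' h.rotate.sin_eang_pos.ne' h.rotate.rotate.sin_eang_pos.ne' hsum hKα hKβ hKγ,
    fun s t r => ?_⟩
  simp
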